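/- Let κ > 0, φ > 0 and ν > 8, and set γ_k = (2^k · ν(ν−1)⋯(ν−k+1))^{−1} = (2^k ∏_{i=0}^{k−1}(ν−i))^{−1}. Then for every h = (h₁,h₂) ∈ ℝ² with h ≠ 0, the eighth-order mixed partial derivative of the Matérn covariance function satisfies ∂⁸C_κ^ν/∂h₁⁴∂h₂⁴ (h) = 9γ₄·C_κ^{ν−4}(h) − 18γ₅·(h₁²+h₂²)·C_κ^{ν−5}(h) + 3γ₆·(h₁⁴ + h₂⁴ + 12h₁²h₂²)·C_κ^{ν−6}(h) − 6γ₇·h₁²h₂²·(h₁²+h₂²)·C_κ^{ν−7}(h) + γ₈·h₁⁴h₂⁴·C_κ^{ν−8}(h). (This is the covariance function of Example 4 with b₁ = b₂ = 0, B₁ = (1,0)^⊤, B₂ = (0,1)^⊤, arising from the nested SPDE (κ²−Δ)^{α/2}X = (B₁^⊤∇)²(B₂^⊤∇)²𝒲.) -/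

import Mathlib

/-!
Differentiating under the integral sign and integrating by parts give
`(z ^ μ K_μ(z))' = -z ^ μ K_{μ-1}(z)`, hence `∇C_κ^μ(h) = -(2μ)⁻¹ C_κ^{μ-1}(h) h` for `μ ≠ 0`.
So `F k := γ_k C_κ^{ν-k}` satisfies `∂ᵢ F k = -hᵢ F (k + 1)` for `k < 8`, exactly like the
functions `(-1)ᵏ f⁽ᵏ⁾(‖h‖² / 2)` built from a single profile `f`. Partial derivatives of
combinations `Σ c h₁ᵃ h₂ᵇ F k` are again such combinations, by the product rule; expanding
`∂⁴F 0/∂h₂⁴ = 3 F 2 - 6 h₂² F 3 + h₂⁴ F 4` and applying `∂⁴/∂h₁⁴` termwise gives the formula.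
-/

open Real

noncomputable def besselK (ν x : ℝ) : ℝ :=
  ∫ t in Set.Ioi (0 : ℝ), Real.exp (-x * Real.cosh t) * Real.cosh (ν * t)

noncomputable def matern (κ φ ν : ℝ) (h : EuclideanSpace ℝ (Fin 2)) : ℝ :=
  2 ^ (1 - ν) * φ ^ 2 / (4 * π * Real.Gamma (ν + 1) * κ ^ (2 * ν)) *
    (κ * ‖h‖) ^ ν * besselK ν (κ * ‖h‖)

noncomputable def pderiv2 (i : Fin 2) (g : EuclideanSpace ℝ (Fin 2) → ℝ) :
    EuclideanSpace ℝ (Fin 2) → ℝ :=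
  fun x => fderiv ℝ g x (EuclideanSpace.single i 1)

open MeasureTheory Set Filter Topology

lemma Real.cosh_le_exp_abs (y : ℝ) : cosh y ≤ exp |y| := by
  rw [← cosh_abs, cosh_eq]
  linarith [exp_le_exp.2 (neg_le_self (abs_nonneg y))]

lemma Real.abs_sinh_le_cosh (y : ℝ) : |sinh y| ≤ cosh y := by
  rw [abs_sinh, ← cosh_abs]
  exact (sinh_lt_cosh _).le

lemma abs_cosh_mul_le (ν : ℝ) {t : ℝ} (ht : 0 ≤ t) : |cosh (ν * t)| ≤ exp (|ν| * t) := by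
  rw [abs_of_pos (cosh_pos _)]
  simpa [abs_mul, abs_of_nonneg ht] using cosh_le_exp_abs (ν * t)

lemma abs_cosh_mul_cosh_mul_le (ν : ℝ) {t : ℝ} (ht : 0 ≤ t) :
    |cosh t * cosh (ν * t)| ≤ exp ((1 + |ν|) * t) := by
  rw [abs_mul, add_mul, one_mul, exp_add]
  exact mul_le_mul (by simpa using abs_cosh_mul_le 1 ht) (abs_cosh_mul_le ν ht)
    (abs_nonneg _) (exp_pos _).le

lemma abs_sinh_mul_sinh_mul_le (ν : ℝ) {t : ℝ} (ht : 0 ≤ t) :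
    |sinh t * sinh (ν * t)| ≤ exp ((1 + |ν|) * t) := by
  refine le_trans ?_ (abs_cosh_mul_cosh_mul_le ν ht)
  rw [abs_mul, abs_mul, abs_of_pos (cosh_pos _), abs_of_pos (cosh_pos _)]
  exact mul_le_mul (abs_sinh_le_cosh _) (abs_sinh_le_cosh _) (abs_nonneg _) (cosh_pos _).le

lemma eventually_exp_mul_sub_mul_cosh_le_exp_neg (c : ℝ) {x : ℝ} (hx : 0 < x) :
    ∀ᶠ t in atTop, exp (c * t - x * cosh t) ≤ exp (-t) := by
  filter_upwards [eventually_ge_atTop (4 * (|c| + 1) / x), eventually_ge_atTop 0] with t ht ht0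
  have hcosh : t ^ 2 / 4 ≤ cosh t := by
    rw [cosh_eq]
    nlinarith [quadratic_le_exp_of_nonneg ht0, exp_pos (-t)]
  have hxt : 4 * (|c| + 1) ≤ x * t := by
    rw [div_le_iff₀ hx] at ht
    linarith
  rw [exp_le_exp]
  nlinarith [mul_nonneg (sub_nonneg.2 hxt) ht0, mul_le_mul_of_nonneg_left hcosh hx.le,
    mul_nonneg (sub_nonneg.2 (le_abs_self c)) ht0]

lemma integrableOn_exp_neg_mul_cosh_mul {g : ℝ → ℝ} (c : ℝ) {x : ℝ} (hx : 0 < x)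
    (hg : Continuous g) (hbound : ∀ t ≥ 0, |g t| ≤ exp (c * t)) :
    IntegrableOn (fun t => exp (-x * cosh t) * g t) (Ioi 0) := by
  refine integrable_of_isBigO_exp_neg one_pos (by fun_prop) (Asymptotics.IsBigO.of_bound 1 ?_)
  filter_upwards [eventually_exp_mul_sub_mul_cosh_le_exp_neg c hx, eventually_ge_atTop 0]
    with t hdecay ht
  calc ‖exp (-x * cosh t) * g t‖ ≤ exp (-x * cosh t) * exp (c * t) := by
        rw [norm_mul, norm_of_nonneg (exp_pos _).le]
        exact mul_le_mul_of_nonneg_left (hbound t ht) (exp_pos _).le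
    _ = exp (c * t - x * cosh t) := by rw [← exp_add]; ring_nf
    _ ≤ 1 * ‖exp (-1 * t)‖ := by rwa [one_mul, neg_one_mul, norm_of_nonneg (exp_pos _).le]

lemma integrableOn_besselK_integrand (ν : ℝ) {x : ℝ} (hx : 0 < x) :
    IntegrableOn (fun t => exp (-x * cosh t) * cosh (ν * t)) (Ioi 0) :=
  integrableOn_exp_neg_mul_cosh_mul |ν| hx (by fun_prop) fun _ ht => abs_cosh_mul_le ν ht

lemma integrableOn_sinh_mul_sinh_integrand (ν : ℝ) {x : ℝ} (hx : 0 < x) :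
    IntegrableOn (fun t => exp (-x * cosh t) * (sinh t * sinh (ν * t))) (Ioi 0) :=
  integrableOn_exp_neg_mul_cosh_mul (1 + |ν|) hx (by fun_prop)
    fun _ ht => abs_sinh_mul_sinh_mul_le ν ht

lemma hasDerivAt_besselK_integral (ν : ℝ) {x : ℝ} (hx : 0 < x) :
    HasDerivAt (besselK ν) (-∫ t in Ioi 0, exp (-x * cosh t) * (cosh t * cosh (ν * t))) x := by
  have hderiv (t y : ℝ) : HasDerivAt (fun y => exp (-y * cosh t) * cosh (ν * t))
      (-(exp (-y * cosh t) * (cosh t * cosh (ν * t)))) y :=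
    ((((hasDerivAt_neg y).mul_const (cosh t)).exp).mul_const (cosh (ν * t))).congr_deriv
      (by ring)
  have hbound : ∀ᵐ t ∂volume.restrict (Ioi 0), ∀ y ∈ Metric.ball x (x / 2),
      ‖-(exp (-y * cosh t) * (cosh t * cosh (ν * t)))‖
        ≤ exp (-(x / 2) * cosh t) * exp ((1 + |ν|) * t) := by
    refine (ae_restrict_iff' measurableSet_Ioi).2 (Eventually.of_forall fun t ht y hy => ?_)
    have hy : x / 2 < y := by
      rw [Metric.mem_ball, Real.dist_eq, abs_lt] at hy
      linarith
    rw [norm_neg, norm_mul, norm_of_nonneg (exp_pos _).le]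
    exact mul_le_mul (exp_le_exp.2 (by nlinarith [cosh_pos t]))
      (abs_cosh_mul_cosh_mul_le ν (le_of_lt ht)) (abs_nonneg _) (exp_pos _).le
  have key := hasDerivAt_integral_of_dominated_loc_of_deriv_le (μ := volume.restrict (Ioi 0))
    (F := fun y t => exp (-y * cosh t) * cosh (ν * t))
    (Metric.ball_mem_nhds x (half_pos hx))
    (Eventually.of_forall fun _ => (by fun_prop : Continuous _).aestronglyMeasurable)
    (integrableOn_besselK_integrand ν hx) (by fun_prop : Continuous _).aestronglyMeasurable
    hbound (integrableOn_exp_neg_mul_cosh_mul (1 + |ν|) (half_pos hx) (by fun_prop)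
      fun t _ => (abs_of_pos (exp_pos _)).le)
    (Eventually.of_forall fun t y _ => hderiv t y)
  rw [← integral_neg]
  exact key.2

lemma tendsto_exp_neg_mul_cosh_mul_sinh_mul (ν : ℝ) {x : ℝ} (hx : 0 < x) :
    Tendsto (fun t => exp (-x * cosh t) * sinh (ν * t)) atTop (𝓝 0) := by
  refine squeeze_zero_norm' ?_ tendsto_exp_neg_atTop_nhds_zero
  filter_upwards [eventually_exp_mul_sub_mul_cosh_le_exp_neg |ν| hx, eventually_ge_atTop 0]
    with t hdecay ht
  calc ‖exp (-x * cosh t) * sinh (ν * t)‖ ≤ exp (-x * cosh t) * exp (|ν| * t) := by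
        rw [norm_mul, norm_of_nonneg (exp_pos _).le]
        exact mul_le_mul_of_nonneg_left ((abs_sinh_le_cosh _).trans
          ((le_abs_self _).trans (abs_cosh_mul_le ν ht))) (exp_pos _).le
    _ = exp (|ν| * t - x * cosh t) := by rw [← exp_add]; ring_nf
    _ ≤ exp (-t) := hdecay

/-- Integration by parts against `t ↦ exp (-x cosh t) sinh (ν t)`, which vanishes at both ends. -/
lemma mul_besselK_eq_integral_sinh_mul_sinh (ν : ℝ) {x : ℝ} (hx : 0 < x) :
    ν * besselK ν x = x * ∫ t in Ioi 0, exp (-x * cosh t) * (sinh t * sinh (ν * t)) := by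
  have hderiv : ∀ t ∈ Ici (0 : ℝ), HasDerivAt (fun t => exp (-x * cosh t) * sinh (ν * t))
      (ν * (exp (-x * cosh t) * cosh (ν * t))
        - x * (exp (-x * cosh t) * (sinh t * sinh (ν * t)))) t := fun t _ =>
    ((((hasDerivAt_cosh t).const_mul (-x)).exp).mul
      ((hasDerivAt_id' t).const_mul ν).sinh).congr_deriv (by ring)
  have hftc := integral_Ioi_of_hasDerivAt_of_tendsto' hderiv
    (((integrableOn_besselK_integrand ν hx).const_mul ν).sub
      ((integrableOn_sinh_mul_sinh_integrand ν hx).const_mul x))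
    (tendsto_exp_neg_mul_cosh_mul_sinh_mul ν hx)
  rw [integral_sub ((integrableOn_besselK_integrand ν hx).const_mul ν)
      ((integrableOn_sinh_mul_sinh_integrand ν hx).const_mul x),
    integral_const_mul, integral_const_mul] at hftc
  simp only [mul_zero, sinh_zero, sub_zero] at hftc
  rw [besselK]
  linarith

lemma hasDerivAt_besselK (ν : ℝ) {x : ℝ} (hx : 0 < x) :
    HasDerivAt (besselK ν) (-besselK (ν - 1) x - ν / x * besselK ν x) x := by
  have hsplit (t : ℝ) : exp (-x * cosh t) * (cosh t * cosh (ν * t))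
      = exp (-x * cosh t) * cosh ((ν - 1) * t) + exp (-x * cosh t) * (sinh t * sinh (ν * t)) := by
    rw [sub_mul, one_mul, cosh_sub]
    ring
  convert hasDerivAt_besselK_integral ν hx using 1
  rw [funext hsplit, integral_add (integrableOn_besselK_integrand (ν - 1) hx)
    (integrableOn_sinh_mul_sinh_integrand ν hx), div_mul_eq_mul_div,
    mul_besselK_eq_integral_sinh_mul_sinh ν hx, mul_div_cancel_left₀ _ hx.ne', besselK]
  ring

lemma hasDerivAt_rpow_mul_besselK (ν : ℝ) {x : ℝ} (hx : 0 < x) :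
    HasDerivAt (fun y => y ^ ν * besselK ν y) (-(x ^ ν * besselK (ν - 1) x)) x := by
  refine ((hasDerivAt_rpow_const (Or.inl hx.ne')).mul (hasDerivAt_besselK ν hx)).congr_deriv ?_
  rw [rpow_sub hx, rpow_one]
  field_simp
  ring

lemma hasFDerivAt_norm_of_ne_zero {E : Type*} [NormedAddCommGroup E] [InnerProductSpace ℝ E]
    {x : E} (hx : x ≠ 0) : HasFDerivAt (‖·‖) (‖x‖⁻¹ • innerSL ℝ x) x := by
  have hsq : ‖x‖ ^ 2 ≠ 0 := by positivity
  have h := (hasStrictFDerivAt_norm_sq x).hasFDerivAt.sqrt hsq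
  simp only [sqrt_sq (norm_nonneg _)] at h
  refine h.congr_fderiv ?_
  ext v
  simp only [one_div, mul_inv_rev, smul_apply, coe_innerSL_apply, nsmul_eq_mul, Nat.cast_ofNat,
    smul_eq_mul]
  field_simp

local notation "ℝ²" => EuclideanSpace ℝ (Fin 2)

lemma pderiv2_add {f g : ℝ² → ℝ} {x : ℝ²} (hf : DifferentiableAt ℝ f x)
    (hg : DifferentiableAt ℝ g x) (i : Fin 2) :
    pderiv2 i (f + g) x = pderiv2 i f x + pderiv2 i g x := by
  simp only [pderiv2, fderiv_add hf hg]
  rfl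

lemma Set.EqOn.pderiv2 {U : Set ℝ²} (hU : IsOpen U) {f g : ℝ² → ℝ} (hfg : EqOn f g U)
    (i : Fin 2) : EqOn (pderiv2 i f) (pderiv2 i g) U := fun x hx => by
  rw [_root_.pderiv2, _root_.pderiv2,
    (Filter.eventuallyEq_of_mem (hU.mem_nhds hx) hfg).fderiv_eq]

lemma Set.EqOn.iterate_pderiv2 {U : Set ℝ²} (hU : IsOpen U) {f g : ℝ² → ℝ} (hfg : EqOn f g U)
    (i : Fin 2) (j : ℕ) : EqOn ((_root_.pderiv2 i)^[j] f) ((_root_.pderiv2 i)^[j] g) U := by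
  induction j generalizing f g with
  | zero => exact hfg
  | succ j ih => exact ih (hfg.pderiv2 hU i)

noncomputable def maternCoeff (κ φ μ : ℝ) : ℝ :=
  2 ^ (1 - μ) * φ ^ 2 / (4 * π * Gamma (μ + 1) * κ ^ (2 * μ))

lemma matern_eq_maternCoeff_mul (κ φ μ : ℝ) (h : ℝ²) :
    matern κ φ μ h = maternCoeff κ φ μ * ((κ * ‖h‖) ^ μ * besselK μ (κ * ‖h‖)) := by
  rw [matern, maternCoeff, mul_assoc]

lemma sq_mul_maternCoeff {κ : ℝ} (φ : ℝ) {μ : ℝ} (hκ : 0 < κ) (hμ : μ ≠ 0) :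
    κ ^ 2 * maternCoeff κ φ μ = (2 * μ)⁻¹ * maternCoeff κ φ (μ - 1) := by
  have h2 : (2 : ℝ) ^ (1 - (μ - 1)) = 2 * 2 ^ (1 - μ) := by
    rw [show 1 - (μ - 1) = 1 + (1 - μ) by ring, rpow_add two_pos, rpow_one]
  have hκ2 : κ ^ (2 * μ) = κ ^ (2 * (μ - 1)) * κ ^ 2 := by
    rw [← rpow_natCast, ← rpow_add hκ, Nat.cast_ofNat]
    ring_nf
  rw [maternCoeff, maternCoeff, sub_add_cancel, Gamma_add_one hμ, h2, hκ2]
  -- `Γ` is `0` at its poles, the nonpositive integers; both sides then vanish.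
  rcases eq_or_ne (Gamma μ) 0 with hΓ | hΓ
  · simp [hΓ]
  · have := (rpow_pos_of_pos hκ (2 * (μ - 1))).ne'
    field_simp

theorem hasFDerivAt_matern {κ : ℝ} (φ : ℝ) {μ : ℝ} (hκ : 0 < κ) (hμ : μ ≠ 0) {x : ℝ²}
    (hx : x ≠ 0) :
    HasFDerivAt (matern κ φ μ) ((-(2 * μ)⁻¹ * matern κ φ (μ - 1) x) • innerSL ℝ x) x := by
  have hz : 0 < κ * ‖x‖ := mul_pos hκ (norm_pos_iff.2 hx)
  have hr : HasDerivAt (fun r => (κ * r) ^ μ * besselK μ (κ * r))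
      (-((κ * ‖x‖) ^ μ * besselK (μ - 1) (κ * ‖x‖)) * κ) ‖x‖ :=
    (hasDerivAt_rpow_mul_besselK μ hz).comp ‖x‖ ((hasDerivAt_id' _).const_mul κ |>.congr_deriv
      (mul_one κ))
  rw [funext (matern_eq_maternCoeff_mul κ φ μ)]
  refine ((hr.comp_hasFDerivAt x (hasFDerivAt_norm_of_ne_zero hx)).const_mul
    (maternCoeff κ φ μ)).congr_fderiv ?_
  rw [smul_smul, smul_smul, matern_eq_maternCoeff_mul]
  simp only [neg_mul, mul_neg, ← mul_assoc]
  rw [← sq_mul_maternCoeff φ hκ hμ, rpow_sub hz, rpow_one]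
  congr 2
  field_simp

def IsRadialLadder {E : Type*} [NormedAddCommGroup E] [InnerProductSpace ℝ E]
    (F : ℕ → E → ℝ) (n : ℕ) : Prop :=
  ∀ k < n, ∀ x ≠ 0, HasFDerivAt (F k) ((-F (k + 1) x) • innerSL ℝ x) x

noncomputable def maternLadder (κ φ ν : ℝ) (k : ℕ) (h : ℝ²) : ℝ :=
  (2 ^ k * ∏ i ∈ Finset.range k, (ν - i))⁻¹ * matern κ φ (ν - k) h

theorem isRadialLadder_maternLadder {κ : ℝ} (φ : ℝ) {ν : ℝ} {n : ℕ} (hκ : 0 < κ)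
    (hν : ∀ k < n, ν ≠ k) : IsRadialLadder (maternLadder κ φ ν) n := by
  intro k hk x hx
  refine ((hasFDerivAt_matern φ hκ (sub_ne_zero.2 (hν k hk)) hx).const_mul _).congr_fderiv ?_
  rw [smul_smul, maternLadder, Finset.prod_range_succ, pow_succ, Nat.cast_succ, sub_sub]
  congr 1
  simp only [mul_inv]
  ring

structure LadderMonomial where
  coeff : ℝ
  exp0 : ℕ
  exp1 : ℕ
  level : ℕ

abbrev LadderPoly := List LadderMonomial

namespace LadderMonomial

noncomputable def eval (F : ℕ → ℝ² → ℝ) (m : LadderMonomial) (x : ℝ²) : ℝ :=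
  m.coeff * x 0 ^ m.exp0 * x 1 ^ m.exp1 * F m.level x

/-- The product rule, with `∂ᵢ (F k) = -xᵢ F (k + 1)`. -/
def pderiv : Fin 2 → LadderMonomial → LadderPoly
  | 0, ⟨c, a, b, k⟩ => (if a = 0 then [] else [⟨c * a, a - 1, b, k⟩]) ++ [⟨-c, a + 1, b, k + 1⟩]
  | 1, ⟨c, a, b, k⟩ => (if b = 0 then [] else [⟨c * b, a, b - 1, k⟩]) ++ [⟨-c, a, b + 1, k + 1⟩]

lemma level_le_of_mem_pderiv {m m' : LadderMonomial} {i : Fin 2} (h : m' ∈ m.pderiv i) :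
    m'.level ≤ m.level + 1 := by
  obtain ⟨c, a, b, k⟩ := m
  fin_cases i <;> simp only [pderiv] at h <;> split_ifs at h <;> aesop

end LadderMonomial

namespace LadderPoly

noncomputable def eval (F : ℕ → ℝ² → ℝ) (P : LadderPoly) (x : ℝ²) : ℝ :=
  (P.map (·.eval F x)).sum

def pderiv (i : Fin 2) (P : LadderPoly) : LadderPoly :=
  P.flatMap (LadderMonomial.pderiv i)

lemma eval_nil (F : ℕ → ℝ² → ℝ) : eval F [] = 0 := rfl

lemma eval_cons (F : ℕ → ℝ² → ℝ) (m : LadderMonomial) (P : LadderPoly) :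
    eval F (m :: P) = m.eval F + eval F P := by
  ext x
  simp [eval]

lemma exists_level_le_of_mem_iterate_pderiv {P : LadderPoly} {i : Fin 2} {j : ℕ}
    {m : LadderMonomial} (hm : m ∈ (pderiv i)^[j] P) : ∃ m₀ ∈ P, m.level ≤ m₀.level + j := by
  induction j generalizing P with
  | zero => exact ⟨m, hm, le_rfl⟩
  | succ j ih =>
    obtain ⟨m₁, hm₁, hle⟩ := ih hm
    obtain ⟨m₀, hm₀, hm₁m₀⟩ := List.mem_flatMap.1 hm₁
    exact ⟨m₀, hm₀, by have := LadderMonomial.level_le_of_mem_pderiv hm₁m₀; omega⟩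

end LadderPoly

namespace LadderMonomial

variable {F : ℕ → ℝ² → ℝ} {n : ℕ} {m : LadderMonomial} {x : ℝ²}

theorem differentiableAt_eval (hF : IsRadialLadder F n) (hm : m.level < n) (hx : x ≠ 0) :
    DifferentiableAt ℝ (m.eval F) x := by
  have := (hF _ hm x hx).differentiableAt
  unfold eval
  fun_prop

theorem pderiv2_eval (hF : IsRadialLadder F n) (hm : m.level < n) (hx : x ≠ 0) (i : Fin 2) :
    pderiv2 i (m.eval F) x = LadderPoly.eval F (m.pderiv i) x := by
  obtain ⟨c, a, b, k⟩ := m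
  have hp (j : Fin 2) : HasFDerivAt (fun y : ℝ² => y j) (EuclideanSpace.proj j : ℝ² →L[ℝ] ℝ) x :=
    (EuclideanSpace.proj j : ℝ² →L[ℝ] ℝ).hasFDerivAt
  have hd : HasFDerivAt (eval F ⟨c, a, b, k⟩) _ x :=
    ((((hp 0).pow a).const_mul c).mul ((hp 1).pow b)).mul (hF _ hm x hx)
  rw [pderiv2, hd.fderiv]
  obtain rfl | rfl : i = 0 ∨ i = 1 := by omega
  all_goals
    simp only [pderiv]
    split_ifs with h0 <;> (try subst h0) <;>
      simp only [LadderPoly.eval, eval, List.map_cons, List.map_nil, List.sum_cons, List.sum_nil,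
        List.nil_append, List.cons_append, Pi.mul_apply, smul_eq_mul, nsmul_eq_mul, add_apply,
        smul_apply, coe_innerSL_apply, EuclideanSpace.inner_single_right, conj_trivial,
        PiLp.proj_apply, PiLp.single_eq_same, PiLp.single_eq_of_ne, ne_eq, one_ne_zero,
        zero_ne_one, not_false_eq_true, Nat.cast_zero] <;> ring

end LadderMonomial

namespace LadderPoly

variable {F : ℕ → ℝ² → ℝ} {n : ℕ} {P : LadderPoly} {x : ℝ²}

theorem differentiableAt_eval (hF : IsRadialLadder F n) (hP : ∀ m ∈ P, m.level < n)
    (hx : x ≠ 0) : DifferentiableAt ℝ (eval F P) x := by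
  induction P with
  | nil =>
    rw [eval_nil]
    exact differentiableAt_const 0
  | cons m P ih =>
    rw [eval_cons]
    exact (m.differentiableAt_eval hF (hP m (by simp)) hx).add
      (ih fun m' hm' => hP m' (by simp [hm']))

theorem pderiv2_eval (hF : IsRadialLadder F n) (hP : ∀ m ∈ P, m.level < n) (hx : x ≠ 0)
    (i : Fin 2) : pderiv2 i (eval F P) x = eval F (P.pderiv i) x := by
  induction P with
  | nil => simp [LadderPoly.pderiv, _root_.pderiv2, eval_nil]
  | cons m P ih =>
    have hP' : ∀ m' ∈ P, m'.level < n := fun m' hm' => hP m' (by simp [hm'])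
    rw [eval_cons, pderiv2_add (m.differentiableAt_eval hF (hP m (by simp)) hx)
      (differentiableAt_eval hF hP' hx), m.pderiv2_eval hF (hP m (by simp)) hx, ih hP']
    simp [LadderPoly.pderiv, eval]

theorem eqOn_iterate_pderiv2_eval (hF : IsRadialLadder F n) (i : Fin 2) {j : ℕ}
    (hP : ∀ m ∈ P, m.level + j ≤ n) :
    EqOn ((_root_.pderiv2 i)^[j] (eval F P)) (eval F ((pderiv i)^[j] P)) {x | x ≠ 0} := by
  induction j generalizing P with
  | zero => exact fun _ _ => rfl
  | succ j ih =>
    have hstep : EqOn (_root_.pderiv2 i (eval F P)) (eval F (P.pderiv i)) {x | x ≠ 0} :=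
      fun x hx => pderiv2_eval hF (fun m hm => by have := hP m hm; omega) hx i
    intro x hx
    rw [Function.iterate_succ_apply, Function.iterate_succ_apply,
      hstep.iterate_pderiv2 isOpen_ne i j hx]
    refine ih (fun m hm => ?_) hx
    obtain ⟨m₀, hm₀, hm⟩ := List.mem_flatMap.1 hm
    have := LadderMonomial.level_le_of_mem_pderiv hm
    have := hP m₀ hm₀
    omega

end LadderPoly

theorem IsRadialLadder.mixed_eighth_partial {F : ℕ → ℝ² → ℝ} (hF : IsRadialLadder F 8) {x : ℝ²}
    (hx : x ≠ 0) :
    (pderiv2 0)^[4] ((pderiv2 1)^[4] (F 0)) x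
      = 9 * F 4 x - 18 * (x 0 ^ 2 + x 1 ^ 2) * F 5 x
        + 3 * (x 0 ^ 4 + x 1 ^ 4 + 12 * x 0 ^ 2 * x 1 ^ 2) * F 6 x
        - 6 * (x 0 ^ 2 * x 1 ^ 2 * (x 0 ^ 2 + x 1 ^ 2)) * F 7 x
        + x 0 ^ 4 * x 1 ^ 4 * F 8 x := by
  let P : LadderPoly := [⟨1, 0, 0, 0⟩]
  have hP : F 0 = P.eval F := by ext; simp [P, LadderPoly.eval, LadderMonomial.eval]
  have hQ : ∀ m ∈ (LadderPoly.pderiv 1)^[4] P, m.level + 4 ≤ 8 := fun m hm => by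
    obtain ⟨m₀, hm₀, hle⟩ := LadderPoly.exists_level_le_of_mem_iterate_pderiv hm
    simp only [P, List.mem_singleton] at hm₀
    subst hm₀
    simpa using hle
  have hinner := LadderPoly.eqOn_iterate_pderiv2_eval hF 1 (P := P) (j := 4) (by simp [P])
  have houter := LadderPoly.eqOn_iterate_pderiv2_eval hF 0 hQ
  rw [hP, (hinner.iterate_pderiv2 isOpen_ne 0 4 hx).trans (houter hx)]
  simp only [P, Function.iterate_succ, Function.iterate_zero, Function.comp_apply, id_eq,
    LadderPoly.pderiv, LadderMonomial.pderiv, List.flatMap_cons, List.flatMap_nil, List.append_nil,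
    List.nil_append, List.cons_append, ↓reduceIte, OfNat.ofNat_ne_zero, one_ne_zero,
    Nat.reduceAdd, Nat.add_one_sub_one, tsub_self, LadderPoly.eval, LadderMonomial.eval,
    List.map_cons, List.map_nil, List.sum_cons, List.sum_nil]
  ring

theorem matern_mixed_eighth_partial_general (κ φ ν : ℝ) (hκ : 0 < κ) (hν : 8 < ν)
    (h : EuclideanSpace ℝ (Fin 2)) (hh : h ≠ 0) :
    (pderiv2 0)^[4] ((pderiv2 1)^[4] (matern κ φ ν)) h
      = 9 * (2 ^ 4 * ∏ i ∈ Finset.range 4, (ν - i))⁻¹ * matern κ φ (ν - 4) h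
        - 18 * (2 ^ 5 * ∏ i ∈ Finset.range 5, (ν - i))⁻¹ * (h 0 ^ 2 + h 1 ^ 2)
            * matern κ φ (ν - 5) h
        + 3 * (2 ^ 6 * ∏ i ∈ Finset.range 6, (ν - i))⁻¹
            * (h 0 ^ 4 + h 1 ^ 4 + 12 * h 0 ^ 2 * h 1 ^ 2) * matern κ φ (ν - 6) h
        - 6 * (2 ^ 7 * ∏ i ∈ Finset.range 7, (ν - i))⁻¹
            * (h 0 ^ 2 * h 1 ^ 2 * (h 0 ^ 2 + h 1 ^ 2)) * matern κ φ (ν - 7) h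
        + (2 ^ 8 * ∏ i ∈ Finset.range 8, (ν - i))⁻¹ * (h 0 ^ 4 * h 1 ^ 4)
            * matern κ φ (ν - 8) h := by
  have hF : IsRadialLadder (maternLadder κ φ ν) 8 :=
    isRadialLadder_maternLadder φ hκ fun k hk => by
      have : (k : ℝ) < 8 := by exact_mod_cast hk
      exact ne_of_gt (by linarith)
  have h0 : matern κ φ ν = maternLadder κ φ ν 0 := by ext; simp [maternLadder]
  rw [h0, hF.mixed_eighth_partial hh]
  simp only [maternLadder, Nat.cast_ofNat]
  ring

/-- Example 4 with `b₁ = b₂ = 0`, `B₁ = (1,0)^⊤`, `B₂ = (0,1)^⊤`: the eighth-order mixed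
partial derivative of the Matérn covariance satisfies
`∂⁸C_κ^ν/∂h₁⁴∂h₂⁴(h) = 9γ₄ C_κ^{ν−4}(h) − 18γ₅ (h₁²+h₂²) C_κ^{ν−5}(h)`
`+ 3γ₆ (h₁⁴+h₂⁴+12h₁²h₂²) C_κ^{ν−6}(h) − 6γ₇ h₁²h₂²(h₁²+h₂²) C_κ^{ν−7}(h)`
`+ γ₈ h₁⁴h₂⁴ C_κ^{ν−8}(h)`, where `γ_k = (2^k ∏_{i=0}^{k−1}(ν−i))⁻¹`. -/
theorem matern_mixed_eighth_partial (κ φ ν : ℝ) (hκ : 0 < κ) (hφ : 0 < φ) (hν : 8 < ν)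
    (h : EuclideanSpace ℝ (Fin 2)) (hh : h ≠ 0) :
    (pderiv2 0)^[4] ((pderiv2 1)^[4] (matern κ φ ν)) h
      = 9 * (2 ^ 4 * ∏ i ∈ Finset.range 4, (ν - i))⁻¹ * matern κ φ (ν - 4) h
        - 18 * (2 ^ 5 * ∏ i ∈ Finset.range 5, (ν - i))⁻¹ * (h 0 ^ 2 + h 1 ^ 2)
            * matern κ φ (ν - 5) h
        + 3 * (2 ^ 6 * ∏ i ∈ Finset.range 6, (ν - i))⁻¹
            * (h 0 ^ 4 + h 1 ^ 4 + 12 * h 0 ^ 2 * h 1 ^ 2) * matern κ φ (ν - 6) h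
        - 6 * (2 ^ 7 * ∏ i ∈ Finset.range 7, (ν - i))⁻¹
            * (h 0 ^ 2 * h 1 ^ 2 * (h 0 ^ 2 + h 1 ^ 2)) * matern κ φ (ν - 7) h
        + (2 ^ 8 * ∏ i ∈ Finset.range 8, (ν - i))⁻¹ * (h 0 ^ 4 * h 1 ^ 4)
            * matern κ φ (ν - 8) h :=
  matern_mixed_eighth_partial_general κ φ ν hκ hν h hh
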